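/- Let i : A → B be an inner anodyne map of simplicial sets, Y an algebraic quasi-category, and g : F_Q(A) → Y a morphism in AlgQ. Then the pushout Y ⊔_{F_Q(A)} F_Q(B) of F_Q(i) along g exists in AlgQ, and the underlying simplicial map of the induced morphism Y → Y ⊔_{F_Q(A)} F_Q(B) is inner anodyne. -/

import Mathlib

/-!
Common definitions for formalizing "Algebraic models for higher categories"
(T. Nikolaus, arXiv:1003.1342): algebraic Kan complexes, algebraic
quasi-categories, model structures, Quillen equivalences, local presentability,
anodyne maps, the fundamental ∞-groupoid and the reduced geometric realization.
-/

universe w₂ w v₂ v u₂ u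

open CategoryTheory CategoryTheory.Limits Simplicial SSet

namespace AlgebraicModels

/-- The morphisms having the left lifting property against every morphism in `P`. -/
def llp {C : Type u} [Category.{v} C] (P : MorphismProperty C) : MorphismProperty C :=
  fun _ _ f => ∀ ⦃X Y : C⦄ (g : X ⟶ Y), P g → HasLiftingProperty f g

/-- The morphisms having the right lifting property against every morphism in `P`. -/
def rlp {C : Type u} [Category.{v} C] (P : MorphismProperty C) : MorphismProperty C :=
  fun _ _ f => ∀ ⦃X Y : C⦄ (g : X ⟶ Y), P g → HasLiftingProperty g f

/-- The horn inclusions `Λ[n, i] ⟶ Δ[n]`, `n ≥ 1`, `0 ≤ i ≤ n`. -/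
inductive hornInclusions : ∀ ⦃X Y : SSet.{0}⦄, (X ⟶ Y) → Prop where
  | mk (n : ℕ) (hn : 1 ≤ n) (i : Fin (n + 1)) : hornInclusions (Λ[n, i].ι)

/-- The inner horn inclusions `Λ[n, i] ⟶ Δ[n]`, `0 < i < n` (hence `n ≥ 2`). -/
inductive innerHornInclusions : ∀ ⦃X Y : SSet.{0}⦄, (X ⟶ Y) → Prop where
  | mk (n : ℕ) (i : Fin (n + 1)) (h0 : 0 < i.val) (hn : i.val < n) :
      innerHornInclusions (Λ[n, i].ι)

/-- The boundary inclusions `∂Δ[n] ⟶ Δ[n]`. -/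
inductive boundaryInclusions : ∀ ⦃X Y : SSet.{0}⦄, (X ⟶ Y) → Prop where
  | mk (n : ℕ) : boundaryInclusions (∂Δ[n].ι)

/-- Anodyne maps: the weakly saturated class generated by the horn inclusions,
characterized (via the small object argument) as the maps having the left lifting
property against every map with the right lifting property against all horn
inclusions; these are the trivial cofibrations of the Kan–Quillen model structure. -/
def anodyne : MorphismProperty SSet.{0} := llp (rlp (fun _ _ f => hornInclusions f))

/-- Inner anodyne maps: the weakly saturated class generated by the inner horn
inclusions. -/
def innerAnodyne : MorphismProperty SSet.{0} :=
  llp (rlp (fun _ _ f => innerHornInclusions f))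

/-- Kan fibrations: right lifting property against all horn inclusions. -/
def kanFibration : MorphismProperty SSet.{0} := rlp (fun _ _ f => hornInclusions f)

/-- Trivial Kan fibrations: right lifting property against all boundary inclusions. -/
def trivialKanFibration : MorphismProperty SSet.{0} :=
  rlp (fun _ _ f => boundaryInclusions f)

/-- Weak homotopy equivalences of simplicial sets, characterized as the maps
factoring as an anodyne map followed by a trivial Kan fibration (this is exactly the
class of weak equivalences of the Kan–Quillen model structure on `SSet`). -/
def weakHomotopyEquiv : MorphismProperty SSet.{0} := fun X Y f =>
  ∃ (Z : SSet.{0}) (i : X ⟶ Z) (p : Z ⟶ Y), anodyne i ∧ trivialKanFibration p ∧ i ≫ p = f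

/-- An algebraic Kan complex: a simplicial set with a distinguished filler for every
horn `Λ[n, i] ⟶ X`, `n ≥ 1`, `0 ≤ i ≤ n`. -/
structure AlgKan : Type 1 where
  carrier : SSet.{0}
  filler : ∀ ⦃n : ℕ⦄ (i : Fin (n + 1)), 1 ≤ n → ((Λ[n, i] : SSet) ⟶ carrier) → (Δ[n] ⟶ carrier)
  filler_spec : ∀ ⦃n : ℕ⦄ (i : Fin (n + 1)) (hn : 1 ≤ n) (h : (Λ[n, i] : SSet) ⟶ carrier),
    Λ[n, i].ι ≫ filler i hn h = h

namespace AlgKan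

/-- Morphisms of algebraic Kan complexes: simplicial maps preserving the
distinguished fillers. -/
@[ext]
structure Hom (X Y : AlgKan) where
  map : X.carrier ⟶ Y.carrier
  preserves : ∀ ⦃n : ℕ⦄ (i : Fin (n + 1)) (hn : 1 ≤ n) (h : (Λ[n, i] : SSet) ⟶ X.carrier),
    X.filler i hn h ≫ map = Y.filler i hn (h ≫ map)

instance : Category.{0} AlgKan where
  Hom := Hom
  id X := ⟨𝟙 X.carrier, fun n i hn h => by simp⟩
  comp {X Y Z} f g := ⟨f.map ≫ g.map, fun n i hn h => by
    rw [← Category.assoc, f.preserves, g.preserves, Category.assoc]⟩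
  id_comp f := Hom.ext (Category.id_comp f.map)
  comp_id f := Hom.ext (Category.comp_id f.map)
  assoc f g h := Hom.ext (Category.assoc f.map g.map h.map)

@[simp] lemma id_map (X : AlgKan) : Hom.map (𝟙 X) = 𝟙 X.carrier := rfl

@[simp] lemma comp_map {X Y Z : AlgKan} (f : X ⟶ Y) (g : Y ⟶ Z) :
    Hom.map (f ≫ g) = f.map ≫ g.map := rfl

end AlgKan

/-- The forgetful functor from algebraic Kan complexes to simplicial sets. -/
def UA : AlgKan ⥤ SSet.{0} where
  obj X := X.carrier
  map f := f.map

/-- An algebraic quasi-category: a simplicial set with a distinguished filler for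
every inner horn `Λ[n, i] ⟶ X`, `0 < i < n`. -/
structure AlgQ : Type 1 where
  carrier : SSet.{0}
  filler : ∀ ⦃n : ℕ⦄ (i : Fin (n + 1)), 0 < i.val → i.val < n →
    ((Λ[n, i] : SSet) ⟶ carrier) → (Δ[n] ⟶ carrier)
  filler_spec : ∀ ⦃n : ℕ⦄ (i : Fin (n + 1)) (h0 : 0 < i.val) (hn : i.val < n)
    (h : (Λ[n, i] : SSet) ⟶ carrier), Λ[n, i].ι ≫ filler i h0 hn h = h

namespace AlgQ

/-- Morphisms of algebraic quasi-categories: simplicial maps preserving the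
distinguished fillers. -/
@[ext]
structure Hom (X Y : AlgQ) where
  map : X.carrier ⟶ Y.carrier
  preserves : ∀ ⦃n : ℕ⦄ (i : Fin (n + 1)) (h0 : 0 < i.val) (hn : i.val < n)
    (h : (Λ[n, i] : SSet) ⟶ X.carrier),
    X.filler i h0 hn h ≫ map = Y.filler i h0 hn (h ≫ map)

instance : Category.{0} AlgQ where
  Hom := Hom
  id X := ⟨𝟙 X.carrier, fun n i h0 hn h => by simp⟩
  comp {X Y Z} f g := ⟨f.map ≫ g.map, fun n i h0 hn h => by
    rw [← Category.assoc, f.preserves, g.preserves, Category.assoc]⟩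
  id_comp f := Hom.ext (Category.id_comp f.map)
  comp_id f := Hom.ext (Category.comp_id f.map)
  assoc f g h := Hom.ext (Category.assoc f.map g.map h.map)

@[simp] lemma id_map (X : AlgQ) : Hom.map (𝟙 X) = 𝟙 X.carrier := rfl

@[simp] lemma comp_map {X Y Z : AlgQ} (f : X ⟶ Y) (g : Y ⟶ Z) :
    Hom.map (f ≫ g) = f.map ≫ g.map := rfl

end AlgQ

/-- The forgetful functor from algebraic quasi-categories to simplicial sets. -/
def UQ : AlgQ ⥤ SSet.{0} where
  obj X := X.carrier
  map f := f.map

/-- A (closed) model structure on a category: classes of weak equivalences,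
cofibrations and fibrations on a complete and cocomplete category, satisfying
Quillen's axioms (two-out-of-three, closure under retracts, the lifting axioms
and the factorization axioms). -/
structure ModelStructure (C : Type u) [Category.{v} C] where
  weq : MorphismProperty C
  cof : MorphismProperty C
  fib : MorphismProperty C
  hasLimits : HasLimitsOfSize.{v, v} C
  hasColimits : HasColimitsOfSize.{v, v} C
  weq_comp : ∀ ⦃X Y Z : C⦄ (f : X ⟶ Y) (g : Y ⟶ Z), weq f → weq g → weq (f ≫ g)
  weq_of_comp_left : ∀ ⦃X Y Z : C⦄ (f : X ⟶ Y) (g : Y ⟶ Z), weq f → weq (f ≫ g) → weq g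
  weq_of_comp_right : ∀ ⦃X Y Z : C⦄ (f : X ⟶ Y) (g : Y ⟶ Z), weq g → weq (f ≫ g) → weq f
  weq_retract : ∀ ⦃X Y A B : C⦄ (f : X ⟶ Y) (g : A ⟶ B)
    (i : Arrow.mk f ⟶ Arrow.mk g) (r : Arrow.mk g ⟶ Arrow.mk f),
    i ≫ r = 𝟙 (Arrow.mk f) → weq g → weq f
  cof_retract : ∀ ⦃X Y A B : C⦄ (f : X ⟶ Y) (g : A ⟶ B)
    (i : Arrow.mk f ⟶ Arrow.mk g) (r : Arrow.mk g ⟶ Arrow.mk f),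
    i ≫ r = 𝟙 (Arrow.mk f) → cof g → cof f
  fib_retract : ∀ ⦃X Y A B : C⦄ (f : X ⟶ Y) (g : A ⟶ B)
    (i : Arrow.mk f ⟶ Arrow.mk g) (r : Arrow.mk g ⟶ Arrow.mk f),
    i ≫ r = 𝟙 (Arrow.mk f) → fib g → fib f
  lifting_trivCof_fib : ∀ ⦃A B X Y : C⦄ (i : A ⟶ B) (p : X ⟶ Y),
    cof i → weq i → fib p → HasLiftingProperty i p
  lifting_cof_trivFib : ∀ ⦃A B X Y : C⦄ (i : A ⟶ B) (p : X ⟶ Y),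
    cof i → fib p → weq p → HasLiftingProperty i p
  factor_trivCof_fib : ∀ ⦃X Y : C⦄ (f : X ⟶ Y), ∃ (Z : C) (i : X ⟶ Z) (p : Z ⟶ Y),
    cof i ∧ weq i ∧ fib p ∧ i ≫ p = f
  factor_cof_trivFib : ∀ ⦃X Y : C⦄ (f : X ⟶ Y), ∃ (Z : C) (i : X ⟶ Z) (p : Z ⟶ Y),
    cof i ∧ fib p ∧ weq p ∧ i ≫ p = f

namespace ModelStructure

variable {C : Type u} [Category.{v} C] (M : ModelStructure C)

/-- The trivial cofibrations of a model structure. -/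
def trivCof : MorphismProperty C := fun _ _ f => M.cof f ∧ M.weq f

/-- The trivial fibrations of a model structure. -/
def trivFib : MorphismProperty C := fun _ _ f => M.fib f ∧ M.weq f

/-- An object is fibrant iff every morphism from the source of a trivial cofibration
to it extends along the trivial cofibration (equivalently, the map to the terminal
object is a fibration). -/
def IsFibrant (X : C) : Prop :=
  ∀ ⦃A B : C⦄ (i : A ⟶ B), M.cof i → M.weq i → ∀ u : A ⟶ X, ∃ v : B ⟶ X, i ≫ v = u

/-- An object is cofibrant iff every morphism from it lifts through any trivial
fibration (equivalently, the map from the initial object is a cofibration). -/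
def IsCofibrant (X : C) : Prop :=
  ∀ ⦃E B : C⦄ (p : E ⟶ B), M.fib p → M.weq p → ∀ u : X ⟶ B, ∃ v : X ⟶ E, v ≫ p = u

/-- A model structure is cofibrantly generated by a class `I` of generating
cofibrations and a class `J` of generating trivial cofibrations if the cofibrations
are exactly `llp (rlp I)` and the trivial cofibrations are exactly `llp (rlp J)`. -/
def IsCofibrantlyGenerated (I J : MorphismProperty C) : Prop :=
  M.cof = llp (rlp I) ∧ M.trivCof = llp (rlp J)

/-- Right properness: the pullback of a weak equivalence along a fibration is a weak
equivalence. -/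
def RightProper : Prop :=
  ∀ ⦃X Y Z : C⦄ (f : X ⟶ Z) (g : Y ⟶ Z) (c : PullbackCone f g),
    IsLimit c → M.fib f → M.weq g → M.weq c.fst

end ModelStructure

/-- A Quillen adjunction, expressed through its left adjoint: the left adjoint
preserves cofibrations and trivial cofibrations. -/
def IsQuillenAdjunction {C : Type u} [Category.{v} C] {D : Type u₂} [Category.{v₂} D]
    (MC : ModelStructure C) (MD : ModelStructure D) (F : C ⥤ D) : Prop :=
  (∀ ⦃X Y : C⦄ (f : X ⟶ Y), MC.cof f → MD.cof (F.map f)) ∧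
  (∀ ⦃X Y : C⦄ (f : X ⟶ Y), MC.cof f → MC.weq f → MD.cof (F.map f) ∧ MD.weq (F.map f))

/-- A Quillen equivalence: a Quillen adjunction such that for every cofibrant `X` and
every fibrant `Y`, a map `F.obj X ⟶ Y` is a weak equivalence iff its adjunct
`X ⟶ G.obj Y` is a weak equivalence. -/
def IsQuillenEquivalence {C : Type u} [Category.{v} C] {D : Type u₂} [Category.{v₂} D]
    (MC : ModelStructure C) (MD : ModelStructure D)
    (F : C ⥤ D) (G : D ⥤ C) (adj : F ⊣ G) : Prop :=
  IsQuillenAdjunction MC MD F ∧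
  ∀ (X : C) (Y : D), MC.IsCofibrant X → MD.IsFibrant Y →
    ∀ f : F.obj X ⟶ Y, MD.weq f ↔ MC.weq ((adj.homEquiv X Y) f)

/-- A category is `κ`-filtered if every diagram of size `< κ` in it admits a cocone. -/
def IsCardinalFiltered (J : Type v) [Category.{v} J] (κ : Cardinal.{v}) : Prop :=
  ∀ (K : Type v) [Category.{v} K] (F : K ⥤ J),
    Cardinal.mk (Arrow K) < κ → Nonempty (Cocone F)

/-- An object `A` is `κ`-presentable (`κ`-small) if `Hom(A, -)` preserves `κ`-filtered
colimits. -/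
def IsPresentableObj {C : Type u} [Category.{v} C] (κ : Cardinal.{v}) (A : C) : Prop :=
  ∀ (J : Type v) [Category.{v} J], IsCardinalFiltered J κ →
    Nonempty (PreservesColimitsOfShape J (coyoneda.obj (Opposite.op A)))

/-- A category is locally presentable if it is cocomplete and there is a small family
of `κ`-presentable objects (for some regular cardinal `κ`) such that every object is a
`κ`-filtered colimit of objects of this family. -/
def IsLocallyPresentable (C : Type u) [Category.{v} C] : Prop :=
  HasColimitsOfSize.{v, v} C ∧
  ∃ κ : Cardinal.{v}, κ.IsRegular ∧
    ∃ (ι : Type v) (G : ι → C),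
      (∀ i, IsPresentableObj κ (G i)) ∧
      ∀ X : C, ∃ (J : Cat.{v, v}) (_ : IsCardinalFiltered J κ) (D : J ⥤ C) (c : Cocone D),
        (∀ j : J, ∃ i : ι, Nonempty (D.obj j ≅ G i)) ∧
        Nonempty (IsColimit c) ∧ Nonempty (c.pt ≅ X)

/-- The forgetful functor from algebraic Kan complexes to algebraic quasi-categories:
it forgets the distinguished fillers of the outer horns (and keeps those of the inner
horns), so that `V ⋙ UQ = UA`. -/
def V : AlgKan ⥤ AlgQ where
  obj X :=
    { carrier := X.carrier
      filler := fun n i h0 hn h => X.filler i (by omega) h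
      filler_spec := fun n i h0 hn h => X.filler_spec i (by omega) h }
  map {X Y} f :=
    { map := f.map
      preserves := fun n i h0 hn h => f.preserves i (by omega) h }
  map_id X := AlgQ.Hom.ext rfl
  map_comp f g := AlgQ.Hom.ext rfl

/-- The image `{ F.map (∂Δ[n] ⟶ Δ[n]) | n ≥ 1 }` of the boundary inclusions with
`n ≥ 1` under a functor `F : SSet ⥤ D`. -/
inductive imageBoundaryInclusions {D : Type u} [Category.{v} D] (F : SSet.{0} ⥤ D) :
    ∀ ⦃X Y : D⦄, (X ⟶ Y) → Prop where
  | mk (n : ℕ) (hn : 1 ≤ n) : imageBoundaryInclusions F (F.map (∂Δ[n].ι))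

/-- The image `{ F.map (Λ[n, i] ⟶ Δ[n]) | n ≥ 1, 0 ≤ i ≤ n }` of the horn inclusions
under a functor `F : SSet ⥤ D`. -/
inductive imageHornInclusions {D : Type u} [Category.{v} D] (F : SSet.{0} ⥤ D) :
    ∀ ⦃X Y : D⦄, (X ⟶ Y) → Prop where
  | mk (n : ℕ) (hn : 1 ≤ n) (i : Fin (n + 1)) :
      imageHornInclusions F (F.map (Λ[n, i].ι))

/-- The geometric realizations of the horn inclusions. -/
inductive topHornInclusions : ∀ ⦃X Y : TopCat.{0}⦄, (X ⟶ Y) → Prop where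
  | mk (n : ℕ) (hn : 1 ≤ n) (i : Fin (n + 1)) :
      topHornInclusions (SSet.toTop.map (Λ[n, i].ι))

/-- The geometric realizations of the boundary inclusions. -/
inductive topBoundaryInclusions : ∀ ⦃X Y : TopCat.{0}⦄, (X ⟶ Y) → Prop where
  | mk (n : ℕ) : topBoundaryInclusions (SSet.toTop.map (∂Δ[n].ι))

/-- Serre fibrations: right lifting property against the realized horn inclusions. -/
def serreFibration : MorphismProperty TopCat.{0} := rlp (fun _ _ f => topHornInclusions f)

/-- Trivial Serre fibrations. -/
def topTrivialFibration : MorphismProperty TopCat.{0} :=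
  rlp (fun _ _ f => topBoundaryInclusions f)

/-- Trivial cofibrations of the Quillen model structure on `Top`. -/
def topTrivialCofibration : MorphismProperty TopCat.{0} :=
  llp (rlp (fun _ _ f => topHornInclusions f))

/-- Weak homotopy equivalences of topological spaces, characterized as the maps
factoring as a trivial cofibration followed by a trivial fibration of the Quillen
model structure on `Top`. -/
def topWeakEquiv : MorphismProperty TopCat.{0} := fun X Y f =>
  ∃ (Z : TopCat.{0}) (i : X ⟶ Z) (p : Z ⟶ Y),
    topTrivialCofibration i ∧ topTrivialFibration p ∧ i ≫ p = f

/-- A choice, for every `n ≥ 1` and `0 ≤ i ≤ n`, of a continuous retraction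
`R(n,i) : |Δ[n]| ⟶ |Λ[n,i]|` of the inclusion of the geometric horn into the
geometric `n`-simplex. -/
structure HornRetractions where
  r : ∀ (n : ℕ) (i : Fin (n + 1)), 1 ≤ n → (SSet.toTop.obj Δ[n] ⟶ SSet.toTop.obj Λ[n, i])
  retraction : ∀ (n : ℕ) (i : Fin (n + 1)) (hn : 1 ≤ n),
    SSet.toTop.map (Λ[n, i].ι) ≫ r n i hn = 𝟙 (SSet.toTop.obj Λ[n, i])

/-- The fundamental `∞`-groupoid of a topological space `M`: the singular simplicial
set `Sing M` with the distinguished filler of a horn `h` given by the adjunct of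
`(adjunct of h) ∘ R(n,i)`. -/
noncomputable def ASingObj (R : HornRetractions) (M : TopCat.{0}) : AlgKan where
  carrier := TopCat.toSSet.obj M
  filler := fun n i hn h =>
    (sSetTopAdj.homEquiv Δ[n] M) (R.r n i hn ≫ (sSetTopAdj.homEquiv Λ[n, i] M).symm h)
  filler_spec := fun n i hn h => by
    rw [← Adjunction.homEquiv_naturality_left, ← Category.assoc, R.retraction,
      Category.id_comp, Equiv.apply_symm_apply]

/-- The fundamental `∞`-groupoid functor `ASing : Top ⥤ AlgKan` associated with the
chosen retractions. -/
noncomputable def ASing (R : HornRetractions) : TopCat.{0} ⥤ AlgKan where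
  obj M := ASingObj R M
  map {M N} f :=
    { map := TopCat.toSSet.map f
      preserves := fun n i hn h => by
        dsimp [ASingObj]
        rw [← Adjunction.homEquiv_naturality_right, Category.assoc]
        exact congrArg _ (congrArg (R.r n i hn ≫ ·)
          (Adjunction.homEquiv_naturality_right_symm _ _ _).symm) }
  map_id M := AlgKan.Hom.ext (TopCat.toSSet.map_id M)
  map_comp f g := AlgKan.Hom.ext (TopCat.toSSet.map_comp f g)

/-- The index type of all horns of an algebraic Kan complex. -/
structure HornIndex (X : AlgKan) : Type where
  n : ℕ
  i : Fin (n + 1)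
  hn : 1 ≤ n
  h : (Λ[n, i] : SSet) ⟶ X.carrier

/-- The reduced geometric realization of an algebraic Kan complex: the coequalizer,
over all horns `h : Λ[n,i] ⟶ X`, of the realization of the distinguished filler of
`h` against the realization of `h` precomposed with the retraction `R(n,i)`. -/
noncomputable def realReducedObj (R : HornRetractions) (X : AlgKan) : TopCat.{0} :=
  coequalizer
    (Sigma.desc fun k : HornIndex X => SSet.toTop.map (X.filler k.i k.hn k.h))
    (Sigma.desc fun k : HornIndex X => R.r k.n k.i k.hn ≫ SSet.toTop.map k.h)

/-- The reduced geometric realization functor `|·|_r : AlgKan ⥤ Top`. -/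
noncomputable def realReduced (R : HornRetractions) : AlgKan ⥤ TopCat.{0} where
  obj X := realReducedObj R X
  map {X Y} f := coequalizer.desc (SSet.toTop.map f.map ≫ coequalizer.π _ _) (by
    apply Sigma.hom_ext
    intro k
    simp only [colimit.ι_desc_assoc, Cofan.mk_ι_app]
    erw [← Functor.map_comp_assoc, f.preserves k.i k.hn k.h]
    have h2 := Limits.Sigma.ι (fun k : HornIndex Y => SSet.toTop.obj Δ[k.n])
        (⟨k.n, k.i, k.hn, k.h ≫ f.map⟩ : HornIndex Y) ≫=
      coequalizer.condition
        (Sigma.desc fun k : HornIndex Y => SSet.toTop.map (Y.filler k.i k.hn k.h))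
        (Sigma.desc fun k : HornIndex Y => R.r k.n k.i k.hn ≫ SSet.toTop.map k.h)
    simp only [colimit.ι_desc_assoc, Cofan.mk_ι_app] at h2
    simp [Functor.map_comp] at h2
    exact h2)
  map_id X := by
    dsimp only [realReducedObj]
    apply coequalizer.hom_ext
    simp [realReducedObj]
  map_comp f g := by
    apply coequalizer.hom_ext
    simp [realReducedObj]

end AlgebraicModels

/-!
The pushout is the colimit of a sequence `Y ⟶ Y ⊔_A B ⟶ X₁ ⟶ X₂ ⟶ ⋯` of simplicial sets, where
`X_{k+1}` is obtained from `X_k` by freely attaching a filler to every inner horn of `X_k` that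
does not already come from the previous stage. Every map of the sequence is a cobase change of
`i` or of a coproduct of inner horn inclusions, hence inner anodyne (and a monomorphism), so
`Y ⟶ colim` is inner anodyne. Horns are finitely presentable, so a horn of the colimit first
appears at a unique stage; its distinguished filler is the filler of `Y` or the cell attached for
it there. With these fillers, maps out of the colimit in `AlgQ` are exactly the compatible pairs
of a map of `Y` and a simplicial map out of `B`, which is the adjoint form of the pushout
property.
-/

open Opposite

namespace CategoryTheory

section SequentialColimit

variable {C : Type u} [Category.{v} C] (F : ℕ ⥤ C) [HasColimit F] (X : C)
  [IsFinitelyPresentable.{0} X] {T : Type v} (φ : ∀ k, (X ⟶ F.obj k) → T)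
  (hφ : ∀ k u, φ (k + 1) (u ≫ F.map (homOfLE (Nat.le_succ k))) = φ k u)

noncomputable def IsFinitelyPresentable.colimitHomCocone :
    Cocone (F ⋙ coyoneda.obj (op X)) where
  pt := T
  ι := NatTrans.ofSequence (fun k => TypeCat.ofHom (φ k)) fun k => by
    ext u
    simpa using hφ k u

noncomputable def IsFinitelyPresentable.colimitHomDesc : (X ⟶ colimit F) → T :=
  (isColimitOfPreserves (coyoneda.obj (op X)) (colimit.isColimit F)).desc
    (colimitHomCocone F X φ hφ)

lemma IsFinitelyPresentable.colimitHomDesc_comp_ι (k : ℕ) (u : X ⟶ F.obj k) :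
    colimitHomDesc F X φ hφ (u ≫ colimit.ι F k) = φ k u :=
  ConcreteCategory.congr_hom
    ((isColimitOfPreserves (coyoneda.obj (op X)) (colimit.isColimit F)).fac
      (colimitHomCocone F X φ hφ) k) u

end SequentialColimit

lemma MorphismProperty.colimit_ι_zero_mem {C : Type*} [Category* C] (W : MorphismProperty C)
    [W.IsStableUnderInfiniteComposition] (F : ℕ ⥤ C) [HasColimit F]
    (hF : ∀ k, W (F.map (homOfLE (Nat.le_succ k)))) : W (colimit.ι F 0) :=
  W.transfiniteCompositionsOfShape_le ℕ _
    (MorphismProperty.TransfiniteCompositionOfShape.mem _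
      { F := F
        isoBot := Iso.refl _
        incl := (colimit.cocone F).ι
        isColimit := colimit.isColimit F
        map_mem := fun k _ => hF k })

namespace Adjunction

variable {C D : Type*} [Category* C] [Category* D] {F : C ⥤ D} {U : D ⥤ C} (adj : F ⊣ U)
  {A B : C} {i : A ⟶ B} {Y : D} {g : F.obj A ⟶ Y} {P : D} {b : B ⟶ U.obj P} {r : Y ⟶ P}
  (w : i ≫ b = adj.homEquiv _ _ g ≫ U.map r)

include w in
lemma map_comp_homEquiv_symm_eq : F.map i ≫ (adj.homEquiv _ _).symm b = g ≫ r := by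
  simpa using adj.homEquiv_naturality_right_square _ _ _ _ w

noncomputable def isColimitPushoutCoconeOfHomEquiv
    (desc : ∀ {Z : D} (v : Y ⟶ Z) (c : B ⟶ U.obj Z),
      i ≫ c = adj.homEquiv _ _ g ≫ U.map v → (P ⟶ Z))
    (fac_left : ∀ {Z : D} (v : Y ⟶ Z) (c : B ⟶ U.obj Z) h, r ≫ desc v c h = v)
    (fac_right : ∀ {Z : D} (v : Y ⟶ Z) (c : B ⟶ U.obj Z) h, b ≫ U.map (desc v c h) = c)
    (hom_ext : ∀ {Z : D} (m m' : P ⟶ Z), r ≫ m = r ≫ m' → b ≫ U.map m = b ≫ U.map m' →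
      m = m') :
    IsColimit (PushoutCocone.mk ((adj.homEquiv _ _).symm b) r
      (adj.map_comp_homEquiv_symm_eq w)) :=
  PushoutCocone.IsColimit.mk _
    (fun s => desc s.inr (adj.homEquiv _ _ s.inl)
      (adj.homEquiv_naturality_left_square _ _ _ _ s.condition))
    (fun s => by
      rw [← adj.homEquiv_naturality_right_symm, fac_right, Equiv.symm_apply_apply])
    (fun s => fac_left _ _ _)
    (fun s m h₁ h₂ => hom_ext _ _ (by rw [h₂, fac_left])
      (by rw [fac_right, ← h₁, adj.homEquiv_naturality_right, Equiv.apply_symm_apply]))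

end Adjunction

end CategoryTheory

namespace SSet

lemma innerAnodyneExtensions_le_monomorphisms :
    innerAnodyneExtensions.{u} ≤ MorphismProperty.monomorphisms SSet.{u} := by
  rw [innerAnodyneExtensions_eq_retracts_transfiniteCompositionsOfShape]
  refine (MorphismProperty.retracts_monotone ?_).trans (MorphismProperty.retracts_le _)
  refine (MorphismProperty.transfiniteCompositionsOfShape_monotone ℕ ?_).trans
    (MorphismProperty.transfiniteCompositionsOfShape_le _ ℕ)
  refine (MorphismProperty.pushouts_monotone ?_).trans MorphismProperty.pushouts_le
  exact (MorphismProperty.coproducts_monotone innerHornInclusions_le_monomorphisms).trans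
    (MorphismProperty.coproducts_le _)

end SSet

namespace AlgebraicModels

lemma rlp_innerHornInclusions_iff {X Y : SSet.{0}} (p : X ⟶ Y) :
    rlp (fun _ _ f => innerHornInclusions f) p ↔ SSet.innerFibrations p := by
  constructor
  · rintro hp _ _ _ ⟨j, h0, hn⟩
    exact hp _ (innerHornInclusions.mk _ j h0 (by simpa [Fin.lt_def] using hn))
  · rintro hp _ _ _ ⟨n, j, h0, hn⟩
    exact hp _ (horn_ι_mem_innerHornInclusions (Fin.lt_def.2 h0) (Fin.lt_def.2 hn))

lemma innerAnodyne_iff_innerAnodyneExtensions {A B : SSet.{0}} (i : A ⟶ B) :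
    innerAnodyne i ↔ innerAnodyneExtensions i :=
  ⟨fun hi _ _ p hp => hi p ((rlp_innerHornInclusions_iff p).2 hp),
    fun hi _ _ p hp => hi p ((rlp_innerHornInclusions_iff p).1 hp)⟩

section AttachFillers

variable {W X : SSet.{0}} (f : W ⟶ X)

/-- Only horns that do not come from `W` get a new filler, so that every horn of the final
colimit has exactly one distinguished filler. -/
structure FreshInnerHorn : Type where
  n : ℕ
  j : Fin (n + 1)
  h0 : 0 < j.val
  hn : j.val < n
  hom : (Λ[n, j] : SSet) ⟶ X
  not_factors : ¬ ∃ u, u ≫ f = hom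

noncomputable abbrev attachFillers : SSet.{0} :=
  pushout (Limits.Sigma.desc fun q : FreshInnerHorn f => q.hom)
    (Limits.Sigma.map fun q : FreshInnerHorn f => Λ[q.n, q.j].ι)

noncomputable def toAttachFillers : X ⟶ attachFillers f := pushout.inl _ _

noncomputable def cell (q : FreshInnerHorn f) : Δ[q.n] ⟶ attachFillers f :=
  Limits.Sigma.ι (fun q : FreshInnerHorn f => Δ[q.n]) q ≫ pushout.inr _ _

lemma horn_ι_cell (q : FreshInnerHorn f) :
    Λ[q.n, q.j].ι ≫ cell f q = q.hom ≫ toAttachFillers f := by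
  simpa [cell, toAttachFillers] using (Limits.Sigma.ι _ q ≫=
    pushout.condition (f := Limits.Sigma.desc fun q : FreshInnerHorn f => q.hom)
      (g := Limits.Sigma.map fun q : FreshInnerHorn f => Λ[q.n, q.j].ι)).symm

lemma innerAnodyneExtensions_toAttachFillers : innerAnodyneExtensions (toAttachFillers f) :=
  MorphismProperty.IsStableUnderCobaseChange.of_isPushout
    (IsPushout.of_hasPushout (Limits.Sigma.desc fun q : FreshInnerHorn f => q.hom) _)
    (MorphismProperty.colimMap _ fun ⟨q⟩ =>
      innerAnodyneExtensions.horn_ι (Fin.lt_def.2 q.h0) (Fin.lt_def.2 q.hn))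

variable {f} {Z : SSet.{0}} (l : X ⟶ Z) (c : ∀ q : FreshInnerHorn f, Δ[q.n] ⟶ Z)
  (hc : ∀ q, Λ[q.n, q.j].ι ≫ c q = q.hom ≫ l)

noncomputable def attachFillersDesc : attachFillers f ⟶ Z :=
  pushout.desc l (Limits.Sigma.desc c)
    (Limits.Sigma.hom_ext _ _ fun q => by simpa using (hc q).symm)

lemma toAttachFillers_desc : toAttachFillers f ≫ attachFillersDesc l c hc = l :=
  pushout.inl_desc _ _ _

lemma cell_desc (q : FreshInnerHorn f) : cell f q ≫ attachFillersDesc l c hc = c q := by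
  rw [cell, attachFillersDesc, Category.assoc, pushout.inr_desc]
  simp

lemma attachFillers_hom_ext {a b : attachFillers f ⟶ Z}
    (h₁ : toAttachFillers f ≫ a = toAttachFillers f ≫ b)
    (h₂ : ∀ q, cell f q ≫ a = cell f q ≫ b) :
    a = b :=
  pushout.hom_ext h₁ (Limits.Sigma.hom_ext _ _ fun q => by simpa [cell] using h₂ q)

end AttachFillers

namespace PushoutAlongFree

variable {A B : SSet.{0}} (i : A ⟶ B) {Y : AlgQ} (g : A ⟶ Y.carrier)

/-- `tower k` is the map `X_{k-1} ⟶ X_k` with `X_{-1} = Y` and `X_0 = Y ⊔_A B`, so that `chain`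
starts at `Y`. -/
@[reducible] noncomputable def tower (k : ℕ) : Arrow SSet.{0} := match k with
  | 0 => Arrow.mk (pushout.inl g i)
  | k + 1 => Arrow.mk (toAttachFillers (tower k).hom)

noncomputable def chain : ℕ ⥤ SSet.{0} :=
  Functor.ofSequence (X := fun k => (tower i g k).left) fun k => (tower i g k).hom

lemma chain_map_succ (k : ℕ) : (chain i g).map (homOfLE (Nat.le_succ k)) = (tower i g k).hom :=
  Functor.ofSequence_map_homOfLE_succ _ k

noncomputable abbrev carrier : SSet.{0} := colimit (chain i g)

noncomputable abbrev ι (k : ℕ) : (tower i g k).left ⟶ carrier i g := colimit.ι (chain i g) k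

lemma tower_hom_ι (k : ℕ) : (tower i g k).hom ≫ ι i g (k + 1) = ι i g k := by
  rw [← chain_map_succ]
  exact colimit.w _ _

lemma tower_hom_ι_assoc (k : ℕ) {W : SSet.{0}} (m : carrier i g ⟶ W) :
    (tower i g k).hom ≫ ι i g (k + 1) ≫ m = ι i g k ≫ m := by
  rw [← Category.assoc, tower_hom_ι]

lemma innerAnodyneExtensions_tower_hom (hi : innerAnodyneExtensions i) (k : ℕ) :
    innerAnodyneExtensions (tower i g k).hom := match k with
  | 0 => MorphismProperty.IsStableUnderCobaseChange.of_isPushout (IsPushout.of_hasPushout g i) hi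
  | _ + 1 => innerAnodyneExtensions_toAttachFillers _

lemma mono_tower_hom [Mono i] (k : ℕ) : Mono (tower i g k).hom := match k with
  | 0 => MorphismProperty.IsStableUnderCobaseChange.of_isPushout
      (P := MorphismProperty.monomorphisms _) (IsPushout.of_hasPushout g i) ‹Mono i›
  | k + 1 => SSet.innerAnodyneExtensions_le_monomorphisms _
      (innerAnodyneExtensions_toAttachFillers (tower i g k).hom)

lemma exists_comp_ι {n : ℕ} {j : Fin (n + 1)} (h : (Λ[n, j] : SSet) ⟶ carrier i g) :
    ∃ k, ∃ u : (Λ[n, j] : SSet) ⟶ (tower i g k).left, u ≫ ι i g k = h :=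
  IsFinitelyPresentable.exists_hom_of_isColimit (colimit.isColimit _) h

section Fillers

variable {n : ℕ} {j : Fin (n + 1)} (h0 : 0 < j.val) (hn : j.val < n)

open Classical in
/-- A horn is filled at the first stage where it appears: by the filler of `Y`, or by the cell
attached for it. -/
noncomputable def fillAt (k : ℕ) (u : (Λ[n, j] : SSet) ⟶ (tower i g k).left) :
    Δ[n] ⟶ carrier i g := match k, u with
  | 0, u => Y.filler j h0 hn u ≫ ι i g 0
  | k + 1, u =>
    if hu : ∃ v, v ≫ (tower i g k).hom = u then fillAt k hu.choose
    else cell _ ⟨n, j, h0, hn, u, hu⟩ ≫ ι i g (k + 2)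

lemma fillAt_zero (u : (Λ[n, j] : SSet) ⟶ (tower i g 0).left) :
    fillAt i g h0 hn 0 u = Y.filler j h0 hn u ≫ ι i g 0 := rfl

open Classical in
lemma fillAt_succ (k : ℕ) (u : (Λ[n, j] : SSet) ⟶ (tower i g (k + 1)).left) :
    fillAt i g h0 hn (k + 1) u =
      if hu : ∃ v, v ≫ (tower i g k).hom = u then fillAt i g h0 hn k hu.choose
      else cell _ ⟨n, j, h0, hn, u, hu⟩ ≫ ι i g (k + 2) := rfl

lemma fillAt_succ_comp [Mono i] (k : ℕ) (u : (Λ[n, j] : SSet) ⟶ (tower i g k).left) :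
    fillAt i g h0 hn (k + 1) (u ≫ (tower i g k).hom) = fillAt i g h0 hn k u := by
  have := mono_tower_hom i g k
  have hu : ∃ v, v ≫ (tower i g k).hom = u ≫ (tower i g k).hom := ⟨u, rfl⟩
  refine (dif_pos hu).trans ?_
  rw [cancel_mono _ |>.1 hu.choose_spec]

lemma fillAt_succ_of_fresh (k : ℕ) (q : FreshInnerHorn (tower i g k).hom) :
    fillAt i g q.h0 q.hn (k + 1) q.hom = cell _ q ≫ ι i g (k + 2) :=
  dif_neg q.not_factors

lemma horn_ι_fillAt (k : ℕ) (u : (Λ[n, j] : SSet) ⟶ (tower i g k).left) :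
    Λ[n, j].ι ≫ fillAt i g h0 hn k u = u ≫ ι i g k := match k, u with
  | 0, u => by rw [fillAt_zero, ← Category.assoc, Y.filler_spec]
  | k + 1, u => by
    rw [fillAt_succ]
    split_ifs with hu
    · rw [horn_ι_fillAt k, ← tower_hom_ι, ← Category.assoc, hu.choose_spec]
    · refine (horn_ι_cell _ ⟨n, j, h0, hn, u, hu⟩ =≫ ι i g (k + 2)).trans ?_
      rw [Category.assoc]
      exact congrArg (u ≫ ·) (tower_hom_ι i g (k + 1))

end Fillers

section DescLegs

variable {i g} {Z : AlgQ} (v : Y ⟶ Z) (b : B ⟶ Z.carrier) (hvb : i ≫ b = g ≫ v.map)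

noncomputable def descLeg (k : ℕ) : (tower i g k).left ⟶ Z.carrier := match k with
  | 0 => v.map
  | 1 => pushout.desc v.map b hvb.symm
  | k + 2 => attachFillersDesc (f := (tower i g k).hom) (descLeg (k + 1))
      (fun q => Z.filler q.j q.h0 q.hn (q.hom ≫ descLeg (k + 1)))
      (fun q => Z.filler_spec q.j q.h0 q.hn _)

lemma tower_hom_descLeg (k : ℕ) :
    (tower i g k).hom ≫ descLeg v b hvb (k + 1) = descLeg v b hvb k := match k with
  | 0 => pushout.inl_desc _ _ _
  | _ + 1 => toAttachFillers_desc _ _ _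

noncomputable def descMap : carrier i g ⟶ Z.carrier :=
  colimit.desc (chain i g)
    { pt := Z.carrier
      ι := NatTrans.ofSequence (descLeg v b hvb) fun k => by
        rw [chain_map_succ]
        exact (tower_hom_descLeg v b hvb k).trans (Category.comp_id _).symm }

lemma ι_descMap (k : ℕ) : ι i g k ≫ descMap v b hvb = descLeg v b hvb k :=
  colimit.ι_desc _ _

lemma fillAt_descMap {n : ℕ} {j : Fin (n + 1)} (h0 : 0 < j.val) (hn : j.val < n) (k : ℕ)
    (u : (Λ[n, j] : SSet) ⟶ (tower i g k).left) :
    fillAt i g h0 hn k u ≫ descMap v b hvb = Z.filler j h0 hn (u ≫ descLeg v b hvb k) :=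
  match k, u with
  | 0, u => by
    rw [fillAt_zero, Category.assoc, ι_descMap]
    exact v.preserves j h0 hn u
  | k + 1, u => by
    rw [fillAt_succ]
    split_ifs with hu
    · rw [fillAt_descMap h0 hn k, ← tower_hom_descLeg, ← Category.assoc, hu.choose_spec]
    · rw [Category.assoc, ι_descMap]
      exact cell_desc _ _ _ _

end DescLegs

variable [Mono i]

noncomputable abbrev obj : AlgQ where
  carrier := carrier i g
  filler _ j h0 hn := IsFinitelyPresentable.colimitHomDesc (chain i g) _ (fillAt i g h0 hn)
    fun k u => by rw [chain_map_succ]; exact fillAt_succ_comp i g h0 hn k u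
  filler_spec _ j h0 hn h := by
    obtain ⟨k, u, rfl⟩ := exists_comp_ι i g h
    exact (congrArg (Λ[_, j].ι ≫ ·) (IsFinitelyPresentable.colimitHomDesc_comp_ι (chain i g) _
      (fillAt i g h0 hn) _ k u)).trans
      (horn_ι_fillAt i g h0 hn k u)

lemma filler_comp_ι {n : ℕ} {j : Fin (n + 1)} (h0 : 0 < j.val) (hn : j.val < n) (k : ℕ)
    (u : (Λ[n, j] : SSet) ⟶ (tower i g k).left) :
    (obj i g).filler j h0 hn (u ≫ ι i g k) = fillAt i g h0 hn k u :=
  IsFinitelyPresentable.colimitHomDesc_comp_ι (chain i g) _ (fillAt i g h0 hn) _ k u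

lemma cell_ι (k : ℕ) (q : FreshInnerHorn (tower i g k).hom) :
    cell _ q ≫ ι i g (k + 2) = (obj i g).filler q.j q.h0 q.hn (q.hom ≫ ι i g (k + 1)) :=
  (fillAt_succ_of_fresh i g k q).symm.trans (filler_comp_ι i g q.h0 q.hn (k + 1) q.hom).symm

noncomputable def fromY : Y ⟶ obj i g where
  map := ι i g 0
  preserves _ _ h0 hn u := (filler_comp_ι i g h0 hn 0 u).symm

noncomputable def fromB : B ⟶ (obj i g).carrier := pushout.inr g i ≫ ι i g 1

lemma comm : i ≫ fromB i g = g ≫ (fromY i g).map := by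
  rw [fromB, ← pushout.condition_assoc]
  exact congrArg (g ≫ ·) (tower_hom_ι i g 0)

lemma innerAnodyneExtensions_fromY (hi : innerAnodyneExtensions i) :
    innerAnodyneExtensions (fromY i g).map :=
  MorphismProperty.colimit_ι_zero_mem _ (chain i g) fun k =>
    (chain_map_succ i g k).symm ▸ innerAnodyneExtensions_tower_hom i g hi k

section Desc

variable {i g} {Z : AlgQ} (v : Y ⟶ Z) (b : B ⟶ Z.carrier) (hvb : i ≫ b = g ≫ v.map)

noncomputable def desc : obj i g ⟶ Z where
  map := descMap v b hvb
  preserves _ j h0 hn h := by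
    obtain ⟨k, u, rfl⟩ := exists_comp_ι i g h
    rw [filler_comp_ι, fillAt_descMap, Category.assoc, ι_descMap]

lemma fromY_desc : fromY i g ≫ desc v b hvb = v :=
  AlgQ.Hom.ext (ι_descMap v b hvb 0)

lemma fromB_desc : fromB i g ≫ (desc v b hvb).map = b := by
  rw [fromB, Category.assoc, desc, ι_descMap]
  exact pushout.inr_desc _ _ _

end Desc

lemma hom_ext {Z : AlgQ} {t t' : obj i g ⟶ Z} (hY : fromY i g ≫ t = fromY i g ≫ t')
    (hB : fromB i g ≫ t.map = fromB i g ≫ t'.map) : t = t' := by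
  have hY' : ι i g 0 ≫ t.map = ι i g 0 ≫ t'.map := congrArg AlgQ.Hom.map hY
  have key (k : ℕ) : ι i g (k + 1) ≫ t.map = ι i g (k + 1) ≫ t'.map := by
    induction k with
    | zero =>
      refine pushout.hom_ext ?_ (by simpa only [fromB, Category.assoc] using hB)
      exact (tower_hom_ι_assoc i g 0 _).trans (hY'.trans (tower_hom_ι_assoc i g 0 _).symm)
    | succ k ih =>
      refine attachFillers_hom_ext ((tower_hom_ι_assoc i g (k + 1) _).trans
        (ih.trans (tower_hom_ι_assoc i g (k + 1) _).symm)) fun q => ?_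
      rw [← Category.assoc, ← Category.assoc, cell_ι, t.preserves, t'.preserves,
        Category.assoc, Category.assoc, ih]
  refine AlgQ.Hom.ext (colimit.hom_ext fun k => ?_)
  cases k with
  | zero => exact hY'
  | succ k => exact key k

end PushoutAlongFree

/-- For an inner anodyne map `i : A ⟶ B`, an algebraic
quasi-category `Y` and a morphism `g : F_Q A ⟶ Y`, the pushout `Y ⊔_{F_Q A} F_Q B`
exists in `AlgQ` and the underlying simplicial map of `Y ⟶ Y ⊔_{F_Q A} F_Q B` is
inner anodyne. -/
theorem pushout_along_free_algQ
    (FQ : SSet.{0} ⥤ AlgQ) (adj : FQ ⊣ UQ)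
    {A B : SSet.{0}} (i : A ⟶ B) (hi : innerAnodyne i) (Y : AlgQ) (g : FQ.obj A ⟶ Y) :
    ∃ (P : AlgQ) (inl : FQ.obj B ⟶ P) (inr : Y ⟶ P) (w : FQ.map i ≫ inl = g ≫ inr),
      Nonempty (IsColimit (PushoutCocone.mk inl inr w)) ∧
      innerAnodyne (UQ.map inr) := by
  rw [innerAnodyne_iff_innerAnodyneExtensions] at hi
  have : Mono i := SSet.innerAnodyneExtensions_le_monomorphisms _ hi
  open PushoutAlongFree in
  exact ⟨_, _, _, _,
    ⟨adj.isColimitPushoutCoconeOfHomEquiv (comm i (adj.homEquiv _ _ g)) desc fromY_desc fromB_desc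
      fun _ _ => hom_ext i _⟩,
    (innerAnodyne_iff_innerAnodyneExtensions _).2 (innerAnodyneExtensions_fromY i _ hi)⟩

end AlgebraicModels
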